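/- Let F be a field, B a unital F-algebra, and h ∈ Z(B)[x] whose leading coefficient is not a zero divisor in B. Order Z² lexicographically by (i,j) < (r,s) iff j < s, or j = s and i < r, and define the multidegree of a nonzero element of A_h(B) (written in the basis x^i ŷ^j) as the largest (i,j) with nonzero coefficient. If a, b ∈ A_h(B) are nonzero and the leading coefficient of at least one of them is not a zero divisor in B, then mdeg(ab) = mdeg(a) + mdeg(b); in particular ab ≠ 0. -/

import Mathlib

open scoped TensorProduct
noncomputable section
variable (F : Type*) [Field F] (B : Type*) [Ring B] [Algebra F B]

/-- B⟨x,y⟩, the free B-ring on x,y commuting with B, realized as B ⊗[F] F⟨x,y⟩. -/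
abbrev BFreeXY := B ⊗[F] FreeAlgebra F (Fin 2)

def Xg : BFreeXY F B := 1 ⊗ₜ FreeAlgebra.ι F 0
def Yg : BFreeXY F B := 1 ⊗ₜ FreeAlgebra.ι F 1

/-- The image of a polynomial a ∈ B[x] inside B⟨x,y⟩. -/
def polyEl (a : Polynomial B) : BFreeXY F B :=
  a.sum fun n b => b ⊗ₜ[F] (FreeAlgebra.ι F 0) ^ n

/-- The relation yx = xy + h. -/
def AhRel (h : Polynomial B) : BFreeXY F B → BFreeXY F B → Prop :=
  fun a b => a = Yg F B * Xg F B ∧ b = Xg F B * Yg F B + polyEl F B h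

/-- The parametric Weyl algebra A_h(B) = B⟨x,y⟩/⟨yx − xy − h⟩. -/
abbrev Ah (h : Polynomial B) := RingQuot (AhRel F B h)

def mkh (h : Polynomial B) : BFreeXY F B →+* Ah F B h := RingQuot.mkRingHom (AhRel F B h)


def incB (h : Polynomial B) : B →+* Ah F B h :=
  (mkh F B h).comp (Algebra.TensorProduct.includeLeftRingHom)

/-- A_h(B) as a left B-module, with b • a = b·a. -/
noncomputable instance instModB (h : Polynomial B) : Module B (Ah F B h) :=
  (incB F B h).toModule

/-- The lexicographic order on ℕ²: (i,j) ≤ (r,s) iff j < s, or j = s and i ≤ r. -/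
def lexLe (q r : ℕ × ℕ) : Prop := q.2 < r.2 ∨ (q.2 = r.2 ∧ q.1 ≤ r.1)

/-- b is not a (two-sided) zero divisor of B. -/
def NotZD {B : Type*} [Ring B] (b : B) : Prop :=
  ∀ c : B, (c * b = 0 → c = 0) ∧ (b * c = 0 → c = 0)

namespace AhAux

/-- strict lexicographic order -/
def lexLt (q r : ℕ × ℕ) : Prop := q.2 < r.2 ∨ (q.2 = r.2 ∧ q.1 < r.1)

lemma lexLt_le {q r : ℕ × ℕ} (hq : lexLt q r) : lexLe q r := by
  rcases hq with hq | ⟨hq, hq'⟩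
  · exact Or.inl hq
  · exact Or.inr ⟨hq, le_of_lt hq'⟩

lemma lexLe_add {p q p' q' : ℕ × ℕ} (h1 : lexLe p q) (h2 : lexLe p' q')
    (hne : ¬ (p = q ∧ p' = q')) :
    lexLt (p.1 + p'.1, p.2 + p'.2) (q.1 + q'.1, q.2 + q'.2) := by
  rcases p with ⟨a, b⟩; rcases q with ⟨c, d⟩; rcases p' with ⟨a', b'⟩; rcases q' with ⟨c', d'⟩
  simp only [lexLe, lexLt, Prod.mk.injEq] at *
  omega

variable {F B : Type*} [Field F] [Ring B] [Algebra F B] (h : Polynomial B)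

local notation "X" => mkh F B h (Xg F B)
local notation "Y" => mkh F B h (Yg F B)

lemma smul_def (c : B) (m : Ah F B h) : c • m = incB F B h c * m := rfl

lemma msub (u v w : Ah F B h) : u * (v - w) = u * v - u * w := mul_sub u v w

lemma subm (u v w : Ah F B h) : (u - v) * w = u * w - v * w := sub_mul u v w

lemma subself (u : Ah F B h) : u - u = 0 := sub_self u

lemma incB_eq (c : B) : incB F B h c = mkh F B h (c ⊗ₜ[F] 1) := rfl

lemma comm_X (c : B) : incB F B h c * X = X * incB F B h c := by
  rw [incB_eq, ← map_mul, ← map_mul]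
  congr 1
  show (c ⊗ₜ[F] (1:FreeAlgebra F (Fin 2))) * ((1:B) ⊗ₜ[F] FreeAlgebra.ι F 0)
      = ((1:B) ⊗ₜ[F] FreeAlgebra.ι F 0) * (c ⊗ₜ[F] (1:FreeAlgebra F (Fin 2)))
  rw [Algebra.TensorProduct.tmul_mul_tmul, Algebra.TensorProduct.tmul_mul_tmul,
    one_mul, mul_one, one_mul, mul_one]

lemma comm_Y (c : B) : incB F B h c * Y = Y * incB F B h c := by
  rw [incB_eq, ← map_mul, ← map_mul]
  congr 1
  show (c ⊗ₜ[F] (1:FreeAlgebra F (Fin 2))) * ((1:B) ⊗ₜ[F] FreeAlgebra.ι F 1)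
      = ((1:B) ⊗ₜ[F] FreeAlgebra.ι F 1) * (c ⊗ₜ[F] (1:FreeAlgebra F (Fin 2)))
  rw [Algebra.TensorProduct.tmul_mul_tmul, Algebra.TensorProduct.tmul_mul_tmul,
    one_mul, mul_one, one_mul, mul_one]

lemma rel : Y * X = X * Y + mkh F B h (polyEl F B h) := by
  rw [← map_mul, ← map_mul, ← map_add]
  exact RingQuot.mkRingHom_rel ⟨rfl, rfl⟩

lemma H_eq : mkh F B h (polyEl F B h) = h.sum fun n c => (c ^ n) • X ^ n := by
  rw [polyEl, Polynomial.sum, Polynomial.sum, map_sum]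
  refine Finset.sum_congr rfl fun n _ => ?_
  rw [smul_def, incB_eq, ← map_pow, ← map_mul]
  congr 1
  simp [Xg, Algebra.TensorProduct.tmul_pow, Algebra.TensorProduct.tmul_mul_tmul]

variable (bs : Module.Basis (ℕ × ℕ) B (Ah F B h))

/-- Span of basis vectors of y-degree < k. -/
def V (k : ℕ) : Submodule B (Ah F B h) :=
  Submodule.span B (bs '' {p | p.2 < k})

lemma bs_mem_V {p : ℕ × ℕ} {k : ℕ} (hp : p.2 < k) : bs p ∈ V h bs k :=
  Submodule.subset_span ⟨p, hp, rfl⟩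

lemma V_mono {k k' : ℕ} (hk : k ≤ k') : V h bs k ≤ V h bs k' :=
  Submodule.span_mono (Set.image_mono fun p hp => lt_of_lt_of_le hp hk)

variable (hbs : ∀ q : ℕ × ℕ, bs q = mkh F B h (Xg F B) ^ q.1 * mkh F B h (Yg F B) ^ q.2)

include hbs

lemma comm_bs (c : B) (p : ℕ × ℕ) : incB F B h c * bs p = bs p * incB F B h c := by
  rw [hbs]
  have hx : Commute (incB F B h c) (mkh F B h (Xg F B)) := comm_X h c
  have hy : Commute (incB F B h c) (mkh F B h (Yg F B)) := comm_Y h c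
  exact Commute.mul_right (hx.pow_right p.1) (hy.pow_right p.2)

lemma bs_mul_Y (p : ℕ × ℕ) : bs p * Y = bs (p.1, p.2 + 1) := by
  rw [hbs p, hbs (p.1, p.2 + 1)]
  rw [mul_assoc, ← pow_succ]

lemma X_mul_bs (p : ℕ × ℕ) : X * bs p = bs (p.1 + 1, p.2) := by
  rw [hbs p, hbs (p.1 + 1, p.2), ← mul_assoc, ← pow_succ']

/-- left multiplication by X preserves V k -/
lemma X_mul_V {k : ℕ} {m : Ah F B h} (hm : m ∈ V h bs k) : X * m ∈ V h bs k := by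
  induction hm using Submodule.span_induction with
  | mem x hx =>
    obtain ⟨p, hp, rfl⟩ := hx
    rw [X_mul_bs h bs hbs]
    exact bs_mem_V h bs hp
  | zero => rw [mul_zero]; exact Submodule.zero_mem _
  | add x y hx hy ihx ihy => rw [mul_add]; exact Submodule.add_mem _ ihx ihy
  | smul c x hx ih =>
    rw [smul_def, ← mul_assoc, ← comm_X, mul_assoc, ← smul_def]
    exact Submodule.smul_mem _ c ih

lemma Xpow_mul_V (i : ℕ) {k : ℕ} {m : Ah F B h} (hm : m ∈ V h bs k) :
    X ^ i * m ∈ V h bs k := by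
  induction i with
  | zero => simpa using hm
  | succ n ih => rw [pow_succ', mul_assoc]; exact X_mul_V h bs hbs ih

/-- right multiplication by Y shifts V k into V (k+1) -/
lemma V_mul_Y {k : ℕ} {m : Ah F B h} (hm : m ∈ V h bs k) : m * Y ∈ V h bs (k + 1) := by
  induction hm using Submodule.span_induction with
  | mem x hx =>
    obtain ⟨p, hp, rfl⟩ := hx
    have hp' : p.2 < k := hp
    rw [bs_mul_Y h bs hbs]
    exact bs_mem_V h bs (show p.2 + 1 < k + 1 by omega)
  | zero => rw [zero_mul]; exact Submodule.zero_mem _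
  | add x y hx hy ihx ihy => rw [add_mul]; exact Submodule.add_mem _ ihx ihy
  | smul c x hx ih =>
    rw [smul_def, mul_assoc, ← smul_def]
    exact Submodule.smul_mem _ c ih

lemma V_mul_Ypow (j : ℕ) {k : ℕ} {m : Ah F B h} (hm : m ∈ V h bs k) :
    m * Y ^ j ∈ V h bs (k + j) := by
  induction j with
  | zero => simpa using hm
  | succ n ih => rw [pow_succ, ← mul_assoc]; exact V_mul_Y h bs hbs ih

lemma H_mul_Xpow (r : ℕ) : mkh F B h (polyEl F B h) * X ^ r ∈ V h bs 1 := by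
  rw [H_eq, Polynomial.sum, Finset.sum_mul]
  refine Submodule.sum_mem _ fun n _ => ?_
  rw [smul_def, mul_assoc, ← pow_add, ← smul_def]
  refine Submodule.smul_mem _ _ ?_
  have hx : (mkh F B h (Xg F B)) ^ (n + r) = bs (n + r, 0) := by
    rw [hbs (n + r, 0)]; rw [pow_zero, mul_one]
  rw [hx]
  exact bs_mem_V h bs Nat.zero_lt_one

lemma Y_mul_Xpow (r : ℕ) : Y * X ^ r - X ^ r * Y ∈ V h bs 1 := by
  induction r with
  | zero =>
    simpa [pow_zero, mul_one, one_mul, subself h] using Submodule.zero_mem (V h bs 1)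
  | succ n ih =>
    have e1 : Y * X ^ (n+1) - X ^ (n+1) * Y
        = (mkh F B h (Xg F B)) * (Y * X ^ n - X ^ n * Y)
          + mkh F B h (polyEl F B h) * X ^ n := by
      have h2 : Y * X ^ (n+1) = (Y * X) * X ^ n := by
        rw [pow_succ', ← mul_assoc]
      rw [h2, rel h]
      simp only [pow_succ', add_mul, msub h, mul_assoc]
      abel
    rw [e1]
    exact Submodule.add_mem _ (X_mul_V h bs hbs ih) (H_mul_Xpow h bs hbs n)

/-- left multiplication by Y maps V k into V (k+1) -/
lemma Y_mul_V {k : ℕ} {m : Ah F B h} (hm : m ∈ V h bs k) : Y * m ∈ V h bs (k + 1) := by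
  induction hm using Submodule.span_induction with
  | mem x hx =>
    obtain ⟨p, hp, rfl⟩ := hx
    have hp' : p.2 < k := hp
    have e1 : Y * bs p
        = (Y * X ^ p.1 - X ^ p.1 * Y) * Y ^ p.2 + bs (p.1, p.2 + 1) := by
      rw [hbs p, hbs (p.1, p.2 + 1)]
      show Y * (X ^ p.1 * Y ^ p.2)
          = (Y * X ^ p.1 - X ^ p.1 * Y) * Y ^ p.2 + X ^ p.1 * Y ^ (p.2 + 1)
      simp only [pow_succ', subm h, mul_assoc]
      abel
    rw [e1]
    refine Submodule.add_mem _ ?_ (bs_mem_V h bs (show p.2 + 1 < k + 1 by omega))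
    have h3 := V_mul_Ypow h bs hbs p.2 (Y_mul_Xpow h bs hbs p.1)
    exact V_mono h bs (show 1 + p.2 ≤ k + 1 by omega) h3
  | zero => rw [mul_zero]; exact Submodule.zero_mem _
  | add x y hx hy ihx ihy => rw [mul_add]; exact Submodule.add_mem _ ihx ihy
  | smul c x hx ih =>
    rw [smul_def, ← mul_assoc, ← comm_Y, mul_assoc, ← smul_def]
    exact Submodule.smul_mem _ c ih

lemma Ypow_mul_V (j : ℕ) {k : ℕ} {m : Ah F B h} (hm : m ∈ V h bs k) :
    Y ^ j * m ∈ V h bs (k + j) := by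
  induction j with
  | zero => simpa using hm
  | succ n ih =>
    rw [pow_succ', mul_assoc]
    exact Y_mul_V h bs hbs ih

lemma Ypow_mul_Xpow (j r : ℕ) : Y ^ j * X ^ r - X ^ r * Y ^ j ∈ V h bs j := by
  induction j with
  | zero =>
    simpa [pow_zero, mul_one, one_mul, subself h] using Submodule.zero_mem (V h bs 0)
  | succ n ih =>
    have e1 : Y ^ (n+1) * X ^ r - X ^ r * Y ^ (n+1)
        = (mkh F B h (Yg F B)) ^ n * (Y * X ^ r - X ^ r * Y)
          + (Y ^ n * X ^ r - X ^ r * Y ^ n) * Y := by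
      simp only [pow_succ, msub h, subm h, mul_assoc]
      abel
    rw [e1]
    refine Submodule.add_mem _ ?_ (V_mul_Y h bs hbs ih)
    have h3 := Ypow_mul_V h bs hbs n (Y_mul_Xpow h bs hbs r)
    exact V_mono h bs (show 1 + n ≤ n + 1 by omega) h3

/-- The key product formula: bs p * bs q = bs (p+q) + lower y-degree terms. -/
lemma bs_mul_bs (p q : ℕ × ℕ) :
    bs p * bs q - bs (p.1 + q.1, p.2 + q.2) ∈ V h bs (p.2 + q.2) := by
  have e1 : bs p * bs q - bs (p.1 + q.1, p.2 + q.2)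
      = (mkh F B h (Xg F B)) ^ p.1
        * ((Y ^ p.2 * X ^ q.1 - X ^ q.1 * Y ^ p.2) * Y ^ q.2) := by
    rw [hbs p, hbs q, hbs (p.1 + q.1, p.2 + q.2)]
    show X ^ p.1 * Y ^ p.2 * (X ^ q.1 * Y ^ q.2) - X ^ (p.1 + q.1) * Y ^ (p.2 + q.2)
        = X ^ p.1 * ((Y ^ p.2 * X ^ q.1 - X ^ q.1 * Y ^ p.2) * Y ^ q.2)
    simp only [pow_add, msub h, subm h, mul_assoc]
  rw [e1]
  exact Xpow_mul_V h bs hbs p.1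
    (V_mul_Ypow h bs hbs q.2 (Ypow_mul_Xpow h bs hbs p.2 q.1))


/-- Span of basis vectors lexicographically below t. -/
def W (t : ℕ × ℕ) : Submodule B (Ah F B h) :=
  Submodule.span B (bs '' {p | lexLt p t})

omit hbs in
lemma bs_mem_W {p t : ℕ × ℕ} (hp : lexLt p t) : bs p ∈ W h bs t :=
  Submodule.subset_span ⟨p, hp, rfl⟩

omit hbs in
lemma V_le_W {k : ℕ} {t : ℕ × ℕ} (hk : k ≤ t.2) : V h bs k ≤ W h bs t :=
  Submodule.span_mono (Set.image_mono fun p hp => Or.inl (lt_of_lt_of_le hp hk))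

omit hbs in
lemma W_repr {t : ℕ × ℕ} {m : Ah F B h} (hm : m ∈ W h bs t) :
    ∀ q : ℕ × ℕ, ¬ lexLt q t → bs.repr m q = 0 := by
  induction hm using Submodule.span_induction with
  | mem x hx =>
    intro q hq
    obtain ⟨p, hp, rfl⟩ := hx
    rw [Module.Basis.repr_self]
    exact Finsupp.single_eq_of_ne (fun he => hq (he ▸ hp))
  | zero => intro q _; simp
  | add x y hx hy ihx ihy =>
    intro q hq
    rw [map_add, Finsupp.add_apply, ihx q hq, ihy q hq, add_zero]
  | smul c x hx ih =>
    intro q hq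
    rw [map_smul, Finsupp.smul_apply, ih q hq, smul_zero]

lemma smul_bs_mul (c d : B) (p p' : ℕ × ℕ) :
    (c • bs p) * (d • bs p') = (c * d) • (bs p * bs p') := by
  rw [smul_def, smul_def, smul_def, map_mul]
  calc (incB F B h c * bs p) * (incB F B h d * bs p')
      = incB F B h c * ((bs p * incB F B h d) * bs p') := by
        rw [mul_assoc, mul_assoc]
    _ = incB F B h c * ((incB F B h d * bs p) * bs p') := by
        rw [← comm_bs h bs hbs d p]
    _ = incB F B h c * incB F B h d * (bs p * bs p') := by
        rw [mul_assoc, mul_assoc]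

omit hbs in
lemma lexLe_snd {p q : ℕ × ℕ} (hp : lexLe p q) : p.2 ≤ q.2 := by
  rcases hp with hp | ⟨hp, _⟩
  · exact le_of_lt hp
  · exact le_of_eq hp

omit hbs in
lemma not_lexLt_self (t : ℕ × ℕ) : ¬ lexLt t t := by
  rintro (hc | ⟨_, hc⟩) <;> omega

end AhAux

/-- Assume the leading coefficient of h is not a zero divisor.  Writing elements
of A_h(B) in the basis {x^i ŷ^j}, define the multidegree of a nonzero element as
the lexicographically largest (i,j) with nonzero coefficient (j compared first).
If a, b are nonzero and the leading coefficient of at least one of them is not a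
zero divisor, then mdeg(ab) = mdeg(a) + mdeg(b); in particular ab ≠ 0. -/
theorem stmt7 (h : Polynomial B) (hcen : ∀ n, h.coeff n ∈ Set.center B)
    (hlead : NotZD h.leadingCoeff)
    (bs : Module.Basis (ℕ × ℕ) B (Ah F B h))
    (hbs : ∀ q : ℕ × ℕ, bs q = mkh F B h (Xg F B) ^ q.1 * mkh F B h (Yg F B) ^ q.2)
    (a b : Ah F B h) (ha : a ≠ 0) (hb : b ≠ 0)
    (da db : ℕ × ℕ)
    (hda : da ∈ (bs.repr a).support ∧ ∀ q ∈ (bs.repr a).support, lexLe q da)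
    (hdb : db ∈ (bs.repr b).support ∧ ∀ q ∈ (bs.repr b).support, lexLe q db)
    (hreg : NotZD (bs.repr a da) ∨ NotZD (bs.repr b db)) :
    a * b ≠ 0 ∧ (da.1 + db.1, da.2 + db.2) ∈ (bs.repr (a * b)).support ∧
      ∀ q ∈ (bs.repr (a * b)).support, lexLe q (da.1 + db.1, da.2 + db.2) := by
  classical
  obtain ⟨hda1, hda2⟩ := hda
  obtain ⟨hdb1, hdb2⟩ := hdb
  set t : ℕ × ℕ := (da.1 + db.1, da.2 + db.2) with ht
  set c0 : B := bs.repr a da * bs.repr b db with hc0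
  set S := (bs.repr a).support with hS
  set T := (bs.repr b).support with hT
  -- basic expansions of a and b
  have ea : a = ∑ p ∈ S, bs.repr a p • bs p := by
    conv_lhs => rw [← Module.Basis.linearCombination_repr bs a]
    rw [Finsupp.linearCombination_apply]
    rfl
  have eb : b = ∑ p ∈ T, bs.repr b p • bs p := by
    conv_lhs => rw [← Module.Basis.linearCombination_repr bs b]
    rw [Finsupp.linearCombination_apply]
    rfl
  have expand : a * b = ∑ z ∈ S ×ˢ T,
      (bs.repr a z.1 * bs.repr b z.2) • (bs z.1 * bs z.2) := by
    calc a * b = (∑ p ∈ S, bs.repr a p • bs p) * (∑ p ∈ T, bs.repr b p • bs p) := by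
          rw [← ea, ← eb]
      _ = ∑ p ∈ S, ∑ p' ∈ T, (bs.repr a p • bs p) * (bs.repr b p' • bs p') := by
          rw [Finset.sum_mul_sum]
      _ = ∑ z ∈ S ×ˢ T, (bs.repr a z.1 * bs.repr b z.2) • (bs z.1 * bs z.2) := by
          rw [Finset.sum_product]
          exact Finset.sum_congr rfl fun p _ => Finset.sum_congr rfl fun p' _ =>
            AhAux.smul_bs_mul h bs hbs _ _ _ _
  -- split each term into main part plus lower-order part
  have expand2 : a * b
      = (∑ z ∈ S ×ˢ T, (bs.repr a z.1 * bs.repr b z.2) • bs (z.1.1 + z.2.1, z.1.2 + z.2.2))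
        + ∑ z ∈ S ×ˢ T, (bs.repr a z.1 * bs.repr b z.2)
            • (bs z.1 * bs z.2 - bs (z.1.1 + z.2.1, z.1.2 + z.2.2)) := by
    rw [expand, ← Finset.sum_add_distrib]
    refine Finset.sum_congr rfl fun z _ => ?_
    rw [← smul_add]
    congr 1
    abel
  have hmem : (da, db) ∈ S ×ˢ T := Finset.mem_product.2 ⟨hda1, hdb1⟩
  have sum1 : ∑ z ∈ S ×ˢ T, (bs.repr a z.1 * bs.repr b z.2) • bs (z.1.1 + z.2.1, z.1.2 + z.2.2)
      = c0 • bs t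
        + ∑ z ∈ (S ×ˢ T).erase (da, db),
            (bs.repr a z.1 * bs.repr b z.2) • bs (z.1.1 + z.2.1, z.1.2 + z.2.2) :=
    (Finset.add_sum_erase _ _ hmem).symm
  -- the two remainder sums lie in W t
  have w2mem : ∑ z ∈ (S ×ˢ T).erase (da, db),
      (bs.repr a z.1 * bs.repr b z.2) • bs (z.1.1 + z.2.1, z.1.2 + z.2.2) ∈ AhAux.W h bs t := by
    refine Submodule.sum_mem _ fun z hz => ?_
    obtain ⟨hzne, hzmem⟩ := Finset.mem_erase.1 hz
    rw [Finset.mem_product] at hzmem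
    refine Submodule.smul_mem _ _ (AhAux.bs_mem_W h bs ?_)
    exact AhAux.lexLe_add (hda2 z.1 hzmem.1) (hdb2 z.2 hzmem.2)
      (fun hc => hzne (Prod.ext hc.1 hc.2))
  have w1mem : ∑ z ∈ S ×ˢ T, (bs.repr a z.1 * bs.repr b z.2)
      • (bs z.1 * bs z.2 - bs (z.1.1 + z.2.1, z.1.2 + z.2.2)) ∈ AhAux.W h bs t := by
    refine Submodule.sum_mem _ fun z hz => Submodule.smul_mem _ _ ?_
    rw [Finset.mem_product] at hz
    have h1 := AhAux.bs_mul_bs h bs hbs z.1 z.2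
    refine AhAux.V_le_W h bs ?_ h1
    have h2 := AhAux.lexLe_snd (hda2 z.1 hz.1)
    have h3 := AhAux.lexLe_snd (hdb2 z.2 hz.2)
    show z.1.2 + z.2.2 ≤ da.2 + db.2
    omega
  -- a * b = c0 • bs t + w with w ∈ W t
  set w := (∑ z ∈ (S ×ˢ T).erase (da, db),
      (bs.repr a z.1 * bs.repr b z.2) • bs (z.1.1 + z.2.1, z.1.2 + z.2.2))
    + ∑ z ∈ S ×ˢ T, (bs.repr a z.1 * bs.repr b z.2)
        • (bs z.1 * bs z.2 - bs (z.1.1 + z.2.1, z.1.2 + z.2.2)) with hw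
  have hab : a * b = c0 • bs t + w := by
    rw [expand2, sum1, hw, add_assoc]
  have hwmem : w ∈ AhAux.W h bs t := Submodule.add_mem _ w2mem w1mem
  -- coefficients of a * b
  have hco : ∀ q : ℕ × ℕ, ¬ AhAux.lexLt q t → bs.repr (a * b) q = if q = t then c0 else 0 := by
    intro q hq
    rw [hab, map_add, map_smul, Module.Basis.repr_self, Finsupp.add_apply,
      AhAux.W_repr h bs hwmem q hq, add_zero, Finsupp.smul_apply]
    by_cases hqt : q = t
    · subst hqt
      rw [if_pos rfl, Finsupp.single_eq_same, smul_eq_mul, mul_one]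
    · rw [if_neg hqt, Finsupp.single_eq_of_ne hqt, smul_zero]
  have hA : bs.repr a da ≠ 0 := Finsupp.mem_support_iff.1 hda1
  have hB : bs.repr b db ≠ 0 := Finsupp.mem_support_iff.1 hdb1
  have hc0ne : c0 ≠ 0 := by
    rcases hreg with hr | hr
    · exact fun h0 => hB (((hr (bs.repr b db)).2) h0)
    · exact fun h0 => hA (((hr (bs.repr a da)).1) h0)
  have hcoefft : bs.repr (a * b) t = c0 := by
    rw [hco t (AhAux.not_lexLt_self t), if_pos rfl]
  have htsupp : t ∈ (bs.repr (a * b)).support :=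
    Finsupp.mem_support_iff.2 (hcoefft ▸ hc0ne)
  refine ⟨?_, htsupp, ?_⟩
  · intro h0
    rw [h0, map_zero] at hcoefft
    exact hc0ne (((Finsupp.zero_apply).symm.trans hcoefft).symm)
  · intro q hq
    by_contra hle
    have h1 : ¬ AhAux.lexLt q t := fun hlt => hle (AhAux.lexLt_le hlt)
    have h2 : q ≠ t := fun he => hle (he ▸ Or.inr ⟨rfl, le_refl _⟩)
    have h3 := hco q h1
    rw [if_neg h2] at h3
    exact (Finsupp.mem_support_iff.1 hq) h3
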